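/- Let C_2 act on the ring B = Z[t, t^{-1}, (t-1)^{-1}] by the ring automorphism sending t to 1/t. Then the invariant subring B^{C_2} is isomorphic to the Laurent polynomial ring Z[s, s^{-1}] via the map sending s to t/(t-1)^2. -/

import Mathlib

/-- The field `ℚ(t)` of rational functions over `ℤ`. -/
abbrev RatFunF : Type := FractionRing (Polynomial ℤ)

/-- The element `t ∈ ℚ(t)`. -/
noncomputable def tF : RatFunF := algebraMap (Polynomial ℤ) RatFunF Polynomial.X

/-- The subring `B = ℤ[t, t⁻¹, (t-1)⁻¹]` of `ℚ(t)`. -/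
noncomputable def Bsub : Subring RatFunF :=
  (Algebra.adjoin ℤ ({tF, tF⁻¹, (tF - 1)⁻¹} : Set RatFunF)).toSubring

/-!
Write `u = t + t⁻¹` and `s = t / (t - 1)²`, so that `s⁻¹ = u - 2`. Every element of
`ℤ[t, t⁻¹]` is `a + b t` with `a, b ∈ ℤ[u]`, and the involution sends it to `a + b t⁻¹`;
as `t ≠ t⁻¹`, it is invariant only if `b = 0`, so the invariants of `ℤ[t, t⁻¹]` form
`ℤ[u]`. An element `x` of `B = ℤ[t, t⁻¹, (t - 1)⁻¹]` becomes an element of `ℤ[t, t⁻¹]`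
after multiplication by a power of the invariant `s⁻¹ = (t - 1)² / t`, so an invariant `x`
lies in `ℤ[u] · s^n ⊆ ℤ[s, s⁻¹]`. Finally `s` is transcendental because `t` is algebraic
over `ℤ[s]`, so `ℤ[s, s⁻¹]` is a Laurent polynomial ring.
-/

-- `Algebra.adjoin_int` only covers the instance `Ring.toIntAlgebra`, which is not the one on
-- a fraction field.
theorem Algebra.toSubring_adjoin_int {A : Type*} [Ring A] [inst : Algebra ℤ A] (s : Set A) :
    (adjoin ℤ s).toSubring = Subring.closure s := by
  obtain rfl : inst = Ring.toIntAlgebra A := Subsingleton.elim _ _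
  exact congrArg Subalgebra.toSubring (adjoin_int s)

open Polynomial in
theorem Transcendental.div_sub_one_sq {R K : Type*} [CommRing R] [IsDomain R] [Field K]
    [Algebra R K] {t : K} (ht : Transcendental R t) : Transcendental R (t / (t - 1) ^ 2) := by
  intro hs
  let S := Algebra.adjoin R {t / (t - 1) ^ 2}
  have : Algebra.IsAlgebraic R S :=
    (Subalgebra.isAlgebraic_iff _).1 (Algebra.isAlgebraic_adjoin_singleton_iff.2 hs)
  have ht1 : t - 1 ≠ 0 := sub_ne_zero.2 fun h ↦ ht (h ▸ isAlgebraic_one)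
  -- `t` is a root of the nonzero polynomial `s (X - 1)² - X` over the algebraic `R[s]`
  refine ht.extendScalars S
    ⟨C ⟨_, Algebra.self_mem_adjoin_singleton R _⟩ * (X - 1) ^ 2 - X, fun h ↦ ?_, ?_⟩
  · simpa using congrArg (eval 1) h
  · simp only [aeval_sub, map_mul, aeval_C, Subalgebra.algebraMap_apply, map_pow, aeval_X,
      map_one]
    field_simp
    ring

namespace LaurentPolynomial

theorem range_eval₂_algebraMap_int {K : Type*} [CommRing K] [Algebra ℤ K] (x : Kˣ) :
    (eval₂ (algebraMap ℤ K) x).range = Subring.closure {(x : K), ↑x⁻¹} := by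
  refine le_antisymm ?_ (Subring.closure_le.2 ?_)
  · rintro _ ⟨p, rfl⟩
    induction p using LaurentPolynomial.induction_on' with
    | add p q hp hq => rw [map_add]; exact add_mem hp hq
    | C_mul_T n a =>
      rw [eval₂_C_mul_T, eq_intCast]
      refine mul_mem (intCast_mem _ a) ?_
      induction n using Int.induction_on with
      | zero => simp [one_mem]
      | succ k ih =>
        rw [zpow_add_one, Units.val_mul]; exact mul_mem ih (Subring.subset_closure (by simp))
      | pred k ih =>
        rw [zpow_sub_one, Units.val_mul]; exact mul_mem ih (Subring.subset_closure (by simp))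
  · rintro _ (rfl | rfl)
    · exact ⟨T 1, by simp⟩
    · exact ⟨T (-1), by simp⟩

theorem eval₂_injective {R K : Type*} [CommRing R] [CommRing K] [Algebra R K] {x : Kˣ}
    (hx : Transcendental R (x : K)) : Function.Injective (eval₂ (algebraMap R K) x) := by
  unfold eval₂
  refine (IsLocalization.lift_injective_iff _).2 fun p q ↦ ?_
  rw [algebraMap_eq_toLaurent, algebraMap_eq_toLaurent, Polynomial.toLaurent_inj]
  exact (transcendental_iff_injective.1 hx).eq_iff.symm

end LaurentPolynomial

section Involution

variable {K : Type*} [Field K] {t : K}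

open Subring

theorem exists_add_mul_of_mem_closure_self_inv (ht : t ≠ 0) {x : K}
    (hx : x ∈ Subring.closure {t, t⁻¹}) :
    ∃ a ∈ Subring.closure {t + t⁻¹}, ∃ b ∈ Subring.closure {t + t⁻¹},
      x = a + b * t := by
  have hu : t + t⁻¹ ∈ Subring.closure {t + t⁻¹} := subset_closure rfl
  induction hx using closure_induction with
  | mem y hy =>
    rcases hy with rfl | rfl
    · exact ⟨0, zero_mem _, 1, one_mem _, by ring⟩
    · exact ⟨_, hu, -1, neg_mem (one_mem _), by ring⟩
  | zero => exact ⟨0, zero_mem _, 0, zero_mem _, by ring⟩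
  | one => exact ⟨1, one_mem _, 0, zero_mem _, by ring⟩
  | add x y _ _ ihx ihy =>
    obtain ⟨a, ha, b, hb, rfl⟩ := ihx
    obtain ⟨c, hc, d, hd, rfl⟩ := ihy
    exact ⟨a + c, add_mem ha hc, b + d, add_mem hb hd, by ring⟩
  | neg x _ ihx =>
    obtain ⟨a, ha, b, hb, rfl⟩ := ihx
    exact ⟨-a, neg_mem ha, -b, neg_mem hb, by ring⟩
  | mul x y _ _ ihx ihy =>
    obtain ⟨a, ha, b, hb, rfl⟩ := ihx
    obtain ⟨c, hc, d, hd, rfl⟩ := ihy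
    -- `t² = (t + t⁻¹) t - 1`
    refine ⟨a * c - b * d, sub_mem (mul_mem ha hc) (mul_mem hb hd),
      a * d + b * c + b * d * (t + t⁻¹),
      add_mem (add_mem (mul_mem ha hd) (mul_mem hb hc)) (mul_mem (mul_mem hb hd) hu), ?_⟩
    linear_combination -(b * d) * inv_mul_cancel₀ ht

theorem exists_mul_pow_mem_closure_self_inv (ht : t ≠ 0) (ht1 : t ≠ 1) {x : K}
    (hx : x ∈ Subring.closure {t, t⁻¹, (t - 1)⁻¹}) :
    ∃ n : ℕ, x * (t + t⁻¹ - 2) ^ n ∈ Subring.closure {t, t⁻¹} := by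
  have htA : t ∈ Subring.closure {t, t⁻¹} := subset_closure (by simp)
  have ht'A : t⁻¹ ∈ Subring.closure {t, t⁻¹} := subset_closure (by simp)
  have hwA : t + t⁻¹ - 2 ∈ Subring.closure {t, t⁻¹} :=
    sub_mem (add_mem htA ht'A) (ofNat_mem _ 2)
  induction hx using closure_induction with
  | mem y hy =>
    rcases hy with rfl | rfl | rfl
    · exact ⟨0, by simpa using htA⟩
    · exact ⟨0, by simpa using ht'A⟩
    · refine ⟨1, ?_⟩
      have : (t - 1)⁻¹ * (t + t⁻¹ - 2) ^ 1 = 1 - t⁻¹ := by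
        field_simp [sub_ne_zero.2 ht1]
        ring
      rw [this]
      exact sub_mem (one_mem _) ht'A
  | zero => exact ⟨0, by simp [zero_mem]⟩
  | one => exact ⟨0, by simp [one_mem]⟩
  | add x y _ _ ihx ihy =>
    obtain ⟨m, hm⟩ := ihx
    obtain ⟨k, hk⟩ := ihy
    refine ⟨m + k, ?_⟩
    rw [show (x + y) * (t + t⁻¹ - 2) ^ (m + k) = x * (t + t⁻¹ - 2) ^ m * (t + t⁻¹ - 2) ^ k
      + y * (t + t⁻¹ - 2) ^ k * (t + t⁻¹ - 2) ^ m by ring]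
    exact add_mem (mul_mem hm (pow_mem hwA k)) (mul_mem hk (pow_mem hwA m))
  | neg x _ ihx =>
    obtain ⟨m, hm⟩ := ihx
    exact ⟨m, by simpa only [neg_mul] using neg_mem hm⟩
  | mul x y _ _ ihx ihy =>
    obtain ⟨m, hm⟩ := ihx
    obtain ⟨k, hk⟩ := ihy
    refine ⟨m + k, ?_⟩
    rw [show x * y * (t + t⁻¹ - 2) ^ (m + k) =
      x * (t + t⁻¹ - 2) ^ m * (y * (t + t⁻¹ - 2) ^ k) by ring]
    exact mul_mem hm hk

theorem inv_div_sub_one_sq (ht : t ≠ 0) : (t / (t - 1) ^ 2)⁻¹ = t + t⁻¹ - 2 := by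
  field_simp
  ring

theorem closure_add_inv_le_closure_div_sub_one_sq (ht : t ≠ 0) :
    Subring.closure {t + t⁻¹} ≤ Subring.closure {t / (t - 1) ^ 2, (t / (t - 1) ^ 2)⁻¹} := by
  rw [closure_le, Set.singleton_subset_iff,
    show t + t⁻¹ = (t / (t - 1) ^ 2)⁻¹ + 2 by rw [inv_div_sub_one_sq ht]; ring]
  exact add_mem (subset_closure (by simp)) (ofNat_mem _ 2)

variable (σ : K ≃+* K) (hσ : σ t = t⁻¹)
include hσ

theorem closure_add_inv_le_eqLocus :
    Subring.closure {t + t⁻¹} ≤ RingHom.eqLocus (σ : K →+* K) (RingHom.id K) := by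
  rw [closure_le, Set.singleton_subset_iff]
  change σ (t + t⁻¹) = t + t⁻¹
  rw [map_add, map_inv₀, hσ, inv_inv, add_comm]

theorem mem_closure_add_inv_of_fixed (ht : t ≠ 0) (ht2 : t ^ 2 ≠ 1) {x : K}
    (hx : x ∈ Subring.closure {t, t⁻¹}) (hfix : σ x = x) :
    x ∈ Subring.closure {t + t⁻¹} := by
  obtain ⟨a, ha, b, hb, rfl⟩ := exists_add_mul_of_mem_closure_self_inv ht hx
  have hσa : σ a = a := closure_add_inv_le_eqLocus σ hσ ha
  have hσb : σ b = b := closure_add_inv_le_eqLocus σ hσ hb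
  rw [map_add, map_mul, hσa, hσb, hσ] at hfix
  have hb0 : b * (t ^ 2 - 1) = 0 := by
    linear_combination (-t) * hfix + b * mul_inv_cancel₀ ht
  rw [mul_eq_zero_iff_right (sub_ne_zero.2 ht2)] at hb0
  simpa [hb0] using ha

theorem map_inv_div_sub_one_sq (ht : t ≠ 0) :
    σ (t / (t - 1) ^ 2)⁻¹ = (t / (t - 1) ^ 2)⁻¹ := by
  have hσu : σ (t + t⁻¹) = t + t⁻¹ := closure_add_inv_le_eqLocus σ hσ (subset_closure rfl)
  rw [inv_div_sub_one_sq ht, map_sub, map_ofNat, hσu]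

theorem map_div_sub_one_sq (ht : t ≠ 0) :
    σ (t / (t - 1) ^ 2) = t / (t - 1) ^ 2 := by
  simpa only [map_inv₀, inv_inj] using map_inv_div_sub_one_sq σ hσ ht

theorem closure_inv_sub_one_inf_eqLocus (ht : t ≠ 0) (ht2 : t ^ 2 ≠ 1) :
    Subring.closure {t, t⁻¹, (t - 1)⁻¹} ⊓ RingHom.eqLocus (σ : K →+* K) (RingHom.id K) =
      Subring.closure {t / (t - 1) ^ 2, (t / (t - 1) ^ 2)⁻¹} := by
  have ht1 : t ≠ 1 := by rintro rfl; simp at ht2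
  refine le_antisymm ?_ (closure_le.2 ?_)
  · rintro x ⟨hxB, hfix : σ x = x⟩
    obtain ⟨n, hn⟩ := exists_mul_pow_mem_closure_self_inv ht ht1 hxB
    rw [← inv_div_sub_one_sq ht] at hn
    have hfix' : σ (x * (t / (t - 1) ^ 2)⁻¹ ^ n) = x * (t / (t - 1) ^ 2)⁻¹ ^ n := by
      rw [map_mul, map_pow, map_inv_div_sub_one_sq σ hσ ht, hfix]
    have hs0 : t / (t - 1) ^ 2 ≠ 0 := div_ne_zero ht (pow_ne_zero 2 (sub_ne_zero.2 ht1))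
    have hx : x = x * (t / (t - 1) ^ 2)⁻¹ ^ n * (t / (t - 1) ^ 2) ^ n := by
      rw [mul_assoc, ← mul_pow, inv_mul_cancel₀ hs0, one_pow, mul_one]
    rw [hx]
    exact mul_mem (closure_add_inv_le_closure_div_sub_one_sq ht
      (mem_closure_add_inv_of_fixed σ hσ ht ht2 hn hfix')) (pow_mem (subset_closure (by simp)) n)
  · have htB : t ∈ Subring.closure {t, t⁻¹, (t - 1)⁻¹} := subset_closure (by simp)
    have ht'B : t⁻¹ ∈ Subring.closure {t, t⁻¹, (t - 1)⁻¹} := subset_closure (by simp)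
    have ht1B : (t - 1)⁻¹ ∈ Subring.closure {t, t⁻¹, (t - 1)⁻¹} :=
      subset_closure (by simp)
    rintro _ (rfl | rfl)
    · refine ⟨?_, map_div_sub_one_sq σ hσ ht⟩
      rw [div_eq_mul_inv, ← inv_pow, pow_two]
      exact mul_mem htB (mul_mem ht1B ht1B)
    · refine ⟨?_, map_inv_div_sub_one_sq σ hσ ht⟩
      rw [inv_div_sub_one_sq ht]
      exact sub_mem (add_mem htB ht'B) (ofNat_mem _ 2)

end Involution

/-- let `C₂` act on `B = ℤ[t, t⁻¹, (t-1)⁻¹]` by `t ↦ 1/t` (i.e. via any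
ring automorphism `σ` of `ℚ(t)` with `σ(t) = t⁻¹`).  Then the invariant subring
`B^{C₂}` is isomorphic to the Laurent polynomial ring `ℤ[s, s⁻¹]` via the map sending
`s` to `t/(t-1)²`. -/
theorem stmt0 (σ : RatFunF ≃+* RatFunF) (hσ : σ tF = tF⁻¹) :
    ∃ e : LaurentPolynomial ℤ ≃+*
        ↥(Bsub ⊓ RingHom.eqLocus (σ : RatFunF →+* RatFunF) (RingHom.id RatFunF)),
      ((e (LaurentPolynomial.T 1) : ↥(Bsub ⊓ RingHom.eqLocus (σ : RatFunF →+* RatFunF)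
          (RingHom.id RatFunF))) : RatFunF) = tF / (tF - 1) ^ 2 := by
  have ht : Transcendental ℤ tF :=
    (transcendental_algebraMap_iff (IsFractionRing.injective _ _)).2
      (Polynomial.transcendental_X ℤ)
  have hs : Transcendental ℤ (tF / (tF - 1) ^ 2) := ht.div_sub_one_sq
  have ht0 : tF ≠ 0 := fun h ↦ ht (h ▸ isAlgebraic_zero)
  have ht2 : tF ^ 2 ≠ 1 := fun h ↦ ht.pow two_pos (h ▸ isAlgebraic_one)
  let s : RatFunFˣ := Units.mk0 (tF / (tF - 1) ^ 2) fun h ↦ hs (h ▸ isAlgebraic_zero)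
  have hrange : (LaurentPolynomial.eval₂ (algebraMap ℤ RatFunF) s).range =
      Bsub ⊓ RingHom.eqLocus (σ : RatFunF →+* RatFunF) (RingHom.id RatFunF) := by
    rw [LaurentPolynomial.range_eval₂_algebraMap_int, Bsub, Algebra.toSubring_adjoin_int,
      closure_inv_sub_one_inf_eqLocus σ hσ ht0 ht2]
    simp [s]
  refine ⟨(RingEquiv.ofLeftInverse (Function.leftInverse_invFun
    (LaurentPolynomial.eval₂_injective hs))).trans (RingEquiv.subringCongr hrange), ?_⟩
  simp [s]
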